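/- Let Y₁, …, Y_n be a sequence of random variables adapted to a filtration with Y_i ∈ [0, B] almost surely. Then with probability at least 1 − δ, ∑_{i=1}^n E[Y_i | F_{i−1}] ≤ 2·∑_{i=1}^n Y_i + 4B·log(4n/δ), and with probability at least 1 − δ, ∑_{i=1}^n Y_i ≤ 2·∑_{i=1}^n E[Y_i | F_{i−1}] + 8B·log(4n/δ). -/

import Mathlib

/-!
For every `θ`, convexity of `exp` gives `exp (θ x / B) ≤ 1 + (e^θ - 1) x / B` on `[0, B]`, hence
`E[exp (θ Y_i / B) | F_i] ≤ exp ((e^θ - 1) E[Y_i | F_i] / B)`. So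
`exp ((θ ∑ Y_i - (e^θ - 1) ∑ E[Y_i | F_i]) / B)` is a supermartingale started at `1`, and Markov's
inequality bounds the probability that it exceeds `1/δ` by `δ`. The choices `θ = -1` and `θ = 1`,
together with `e⁻¹ < 1/2`, `e - 1 < 2` and `0 ≤ log (1/δ) ≤ log (4n/δ)`, give the two bounds.
-/

open MeasureTheory

open ProbabilityTheory Real Finset Set

theorem exp_mul_le_one_add_mul (θ : ℝ) {t : ℝ} (ht : t ∈ Icc (0 : ℝ) 1) :
    exp (θ * t) ≤ 1 + (exp θ - 1) * t := by
  have h := convexOn_exp.2 (mem_univ 0) (mem_univ θ) (sub_nonneg.2 ht.2) ht.1 (sub_add_cancel 1 t)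
  simp only [smul_eq_mul, mul_zero, zero_add, exp_zero, mul_one] at h
  rw [mul_comm]
  linarith

theorem mul_div_le_abs {B x : ℝ} (hB : 0 < B) (hx : x ∈ Icc 0 B) (a : ℝ) : a * x / B ≤ |a| := by
  rw [div_le_iff₀ hB]
  nlinarith [mul_nonneg (sub_nonneg.2 (le_abs_self a)) hx.1,
    mul_nonneg (abs_nonneg a) (sub_nonneg.2 hx.2)]

section

variable {Ω : Type*} {m m0 : MeasurableSpace Ω} {μ : Measure Ω} {B : ℝ} {X : Ω → ℝ}

theorem integrable_exp_of_ae_le [IsFiniteMeasure μ] {f : Ω → ℝ} (hf : AEStronglyMeasurable f μ)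
    {K : ℝ} (hK : ∀ᵐ ω ∂μ, f ω ≤ K) : Integrable (fun ω => exp (f ω)) μ :=
  .of_bound (continuous_exp.comp_aestronglyMeasurable hf) (exp K) <| by
    filter_upwards [hK] with ω h
    rwa [norm_of_nonneg (exp_pos _).le, exp_le_exp]

theorem integrable_exp_sum_range [IsFiniteMeasure μ] {D : ℕ → Ω → ℝ}
    (hD : ∀ i, AEStronglyMeasurable (D i) μ) {K : ℝ} (hDK : ∀ᵐ ω ∂μ, ∀ i, D i ω ≤ K) (n : ℕ) :
    Integrable (fun ω => exp (∑ i ∈ range n, D i ω)) μ := by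
  refine integrable_exp_of_ae_le (K := n * K)
    (Finset.aestronglyMeasurable_fun_sum _ fun i _ => hD i) ?_
  filter_upwards [hDK] with ω h
  simpa using Finset.sum_le_card_nsmul (range n) _ _ fun i _ => h i

theorem integral_exp_sum_range_le_one [IsProbabilityMeasure μ] (F : Filtration ℕ m0)
    {D : ℕ → Ω → ℝ} (hD : ∀ i, StronglyMeasurable[F (i + 1)] (D i)) {K : ℝ}
    (hDK : ∀ᵐ ω ∂μ, ∀ i, D i ω ≤ K) (hcond : ∀ i, μ[fun ω => exp (D i ω) | F i] ≤ᵐ[μ] 1)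
    (n : ℕ) : ∫ ω, exp (∑ i ∈ range n, D i ω) ∂μ ≤ 1 := by
  have hDm i : AEStronglyMeasurable (D i) μ := ((hD i).mono (F.le _)).aestronglyMeasurable
  induction n with
  | zero => simp
  | succ k ih =>
    set Z := fun ω => exp (∑ i ∈ range k, D i ω)
    have hZ : StronglyMeasurable[F k] Z := continuous_exp.comp_stronglyMeasurable <|
      Finset.stronglyMeasurable_fun_sum _ fun i hi => (hD i).mono (F.mono (mem_range.1 hi))
    have hsplit : (fun ω => exp (∑ i ∈ range (k + 1), D i ω)) = Z * fun ω => exp (D k ω) := by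
      ext ω
      simp [Z, sum_range_succ, exp_add]
    have hpull : μ[Z * fun ω => exp (D k ω) | F k] =ᵐ[μ] Z * μ[fun ω => exp (D k ω) | F k] :=
      condExp_mul_of_stronglyMeasurable_left hZ (hsplit ▸ integrable_exp_sum_range hDm hDK _)
        (integrable_exp_of_ae_le (hDm k) (by filter_upwards [hDK] with ω h using h k))
    calc ∫ ω, exp (∑ i ∈ range (k + 1), D i ω) ∂μ
        = ∫ ω, (μ[Z * fun ω => exp (D k ω) | F k]) ω ∂μ := by
          rw [integral_condExp (F.le k), hsplit]
      _ = ∫ ω, (Z * μ[fun ω => exp (D k ω) | F k]) ω ∂μ := integral_congr_ae hpull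
      _ ≤ ∫ ω, Z ω ∂μ := by
          refine integral_mono_ae (integrable_condExp.congr hpull)
            (integrable_exp_sum_range hDm hDK k) ?_
          filter_upwards [hcond k] with ω h
          exact mul_le_of_le_one_right (exp_pos _).le h
      _ ≤ 1 := ih

theorem ae_condExp_mem_Icc [IsFiniteMeasure μ] (hm : m ≤ m0) (hX : Integrable X μ)
    (hXB : ∀ᵐ ω ∂μ, X ω ∈ Icc 0 B) : ∀ᵐ ω ∂μ, (μ[X | m]) ω ∈ Icc 0 B := by
  have hnonneg : 0 ≤ᵐ[μ] μ[X | m] := condExp_nonneg (by filter_upwards [hXB] with ω h using h.1)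
  have hle : μ[X | m] ≤ᵐ[μ] fun _ => B := by
    simpa only [condExp_const hm] using condExp_mono (m := m) hX (integrable_const B)
      (by filter_upwards [hXB] with ω h using h.2)
  filter_upwards [hnonneg, hle] with ω h₀ h₁ using ⟨h₀, h₁⟩

theorem integrable_exp_mul_div [IsFiniteMeasure μ] (hB : 0 < B) (hX : Integrable X μ)
    (hXB : ∀ᵐ ω ∂μ, X ω ∈ Icc 0 B) (θ : ℝ) : Integrable (fun ω => exp (θ * X ω / B)) μ :=
  integrable_exp_of_ae_le (by fun_prop)
    (by filter_upwards [hXB] with ω h using mul_div_le_abs hB h θ)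

theorem condExp_exp_mul_div_le [IsFiniteMeasure μ] (hm : m ≤ m0) (hB : 0 < B) (hX : Integrable X μ)
    (hXB : ∀ᵐ ω ∂μ, X ω ∈ Icc 0 B) (θ : ℝ) :
    μ[fun ω => exp (θ * X ω / B) | m] ≤ᵐ[μ] fun ω => exp ((exp θ - 1) * (μ[X | m]) ω / B) := by
  set κ := (exp θ - 1) / B
  have hchord : (fun ω => exp (θ * X ω / B)) ≤ᵐ[μ] (fun _ => 1) + κ • X := by
    filter_upwards [hXB] with ω h
    have := exp_mul_le_one_add_mul θ (t := X ω / B)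
      ⟨div_nonneg h.1 hB.le, (div_le_one hB).2 h.2⟩
    simp only [Pi.add_apply, Pi.smul_apply, smul_eq_mul, κ]
    convert this using 2 <;> ring
  have hlin : μ[(fun _ => (1 : ℝ)) + κ • X | m] =ᵐ[μ] (fun _ => 1) + κ • μ[X | m] := by
    filter_upwards [condExp_add (integrable_const 1) (hX.smul κ) m, condExp_smul κ X m]
      with ω h₁ h₂
    rw [h₁, Pi.add_apply, condExp_const hm, Pi.add_apply, h₂]
  filter_upwards [condExp_mono (m := m) (integrable_exp_mul_div hB hX hXB θ)
    ((integrable_const 1).add (hX.smul κ)) hchord, hlin] with ω h₁ h₂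
  rw [h₂] at h₁
  calc _ ≤ 1 + κ * (μ[X | m]) ω := h₁
    _ ≤ exp (κ * (μ[X | m]) ω) := by linarith [add_one_le_exp (κ * (μ[X | m]) ω)]
    _ = exp ((exp θ - 1) * (μ[X | m]) ω / B) := by rw [div_mul_eq_mul_div]

theorem condExp_exp_increment_le_one [IsFiniteMeasure μ] (hm : m ≤ m0) (hB : 0 < B)
    (hX : Integrable X μ) (hXB : ∀ᵐ ω ∂μ, X ω ∈ Icc 0 B) (θ : ℝ) :
    μ[fun ω => exp ((θ * X ω - (exp θ - 1) * (μ[X | m]) ω) / B) | m] ≤ᵐ[μ] 1 := by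
  set c := exp θ - 1
  set G : Ω → ℝ := fun ω => exp (-c * (μ[X | m]) ω / B)
  have hsplit : (fun ω => exp ((θ * X ω - c * (μ[X | m]) ω) / B)) =
      G * fun ω => exp (θ * X ω / B) := by
    ext ω
    simp only [Pi.mul_apply, G, ← exp_add]
    ring_nf
  have hG : StronglyMeasurable[m] G := by
    unfold G
    fun_prop
  have hGbound : ∀ᵐ ω ∂μ, ‖G ω‖ ≤ exp |-c| := by
    filter_upwards [ae_condExp_mem_Icc hm hX hXB] with ω h
    rw [norm_of_nonneg (exp_pos _).le, exp_le_exp]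
    exact mul_div_le_abs hB h (-c)
  have hpull := condExp_stronglyMeasurable_mul_of_bound hm hG
    (integrable_exp_mul_div hB hX hXB θ) _ hGbound
  rw [hsplit]
  filter_upwards [hpull, condExp_exp_mul_div_le hm hB hX hXB θ] with ω h₁ h₂
  calc (μ[G * fun ω => exp (θ * X ω / B) | m]) ω
      = G ω * (μ[fun ω => exp (θ * X ω / B) | m]) ω := h₁
    _ ≤ G ω * exp (c * (μ[X | m]) ω / B) := mul_le_mul_of_nonneg_left h₂ (exp_pos _).le
    _ = 1 := by rw [← exp_add, neg_mul, neg_div, neg_add_cancel, exp_zero]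

theorem measure_mul_log_inv_le_sum_sub_sum_le [IsProbabilityMeasure μ] (F : Filtration ℕ m0)
    (hB : 0 < B) {Y : ℕ → Ω → ℝ} (hadapt : ∀ i, StronglyMeasurable[F (i + 1)] (Y i))
    (hbdd : ∀ᵐ ω ∂μ, ∀ i, Y i ω ∈ Icc (0 : ℝ) B) (θ : ℝ) (n : ℕ) {δ : ℝ} (hδ : 0 < δ) :
    μ {ω | B * log δ⁻¹ ≤
      θ * ∑ i ∈ range n, Y i ω - (exp θ - 1) * ∑ i ∈ range n, (μ[Y i | F i]) ω} ≤
      ENNReal.ofReal δ := by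
  set D : ℕ → Ω → ℝ := fun i ω => (θ * Y i ω - (exp θ - 1) * (μ[Y i | F i]) ω) / B
  have hYB i : ∀ᵐ ω ∂μ, Y i ω ∈ Icc 0 B := by filter_upwards [hbdd] with ω h using h i
  have hY i : Integrable (Y i) μ :=
    .of_bound ((hadapt i).mono (F.le _)).aestronglyMeasurable B <| by
      filter_upwards [hYB i] with ω h
      rw [Real.norm_eq_abs, abs_of_nonneg h.1]
      exact h.2
  have hD i : StronglyMeasurable[F (i + 1)] (D i) := by
    have hE : StronglyMeasurable[F (i + 1)] (μ[Y i | F i]) :=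
      stronglyMeasurable_condExp.mono (F.mono i.le_succ)
    have := hadapt i
    fun_prop
  have hDK : ∀ᵐ ω ∂μ, ∀ i, D i ω ≤ |θ| + |-(exp θ - 1)| := by
    rw [ae_all_iff]
    intro i
    filter_upwards [hYB i, ae_condExp_mem_Icc (F.le i) (hY i) (hYB i)] with ω hYω hEω
    calc D i ω = θ * Y i ω / B + -(exp θ - 1) * (μ[Y i | F i]) ω / B := by ring
      _ ≤ |θ| + |-(exp θ - 1)| := add_le_add (mul_div_le_abs hB hYω θ) (mul_div_le_abs hB hEω _)
  have hevent : {ω | B * log δ⁻¹ ≤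
      θ * ∑ i ∈ range n, Y i ω - (exp θ - 1) * ∑ i ∈ range n, (μ[Y i | F i]) ω} =
      {ω | log δ⁻¹ ≤ ∑ i ∈ range n, D i ω} := by
    ext ω
    simp only [mem_ofPred_eq, D, ← sum_div, sum_sub_distrib, mul_sum, le_div_iff₀ hB, mul_comm B]
  have hint := integrable_exp_sum_range
    (fun i => ((hD i).mono (F.le _)).aestronglyMeasurable) hDK n
  have hchernoff := measure_ge_le_exp_mul_mgf (log δ⁻¹) zero_le_one (by simpa using hint)
  have hmgf : mgf (fun ω => ∑ i ∈ range n, D i ω) μ 1 ≤ 1 := by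
    simpa [mgf] using integral_exp_sum_range_le_one F hD hDK
      (fun i => condExp_exp_increment_le_one (F.le i) hB (hY i) (hYB i) θ) n
  rw [hevent, ENNReal.le_ofReal_iff_toReal_le (measure_ne_top _ _) hδ.le]
  calc μ.real _ ≤ exp (-1 * log δ⁻¹) * mgf (fun ω => ∑ i ∈ range n, D i ω) μ 1 := hchernoff
    _ ≤ exp (-1 * log δ⁻¹) := mul_le_of_le_one_right (exp_pos _).le hmgf
    _ = δ := by rw [neg_one_mul, log_inv, neg_neg, exp_log hδ]

end

theorem stmt_17 {Ω : Type*} {m0 : MeasurableSpace Ω} (μ : Measure Ω) [IsProbabilityMeasure μ]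
    (F : Filtration ℕ m0) (n : ℕ) (hn : 1 ≤ n) (B : ℝ) (hB : 0 < B)
    (Y : ℕ → Ω → ℝ) (δ : ℝ) (hδ0 : 0 < δ) (hδ1 : δ < 1)
    (hadapt : ∀ i, StronglyMeasurable[F (i + 1)] (Y i))
    (hbdd : ∀ᵐ ω ∂μ, ∀ i, Y i ω ∈ Set.Icc (0 : ℝ) B) :
    μ {ω | ¬ (∑ i ∈ Finset.range n, (μ[Y i | F i]) ω ≤
        2 * ∑ i ∈ Finset.range n, Y i ω + 4 * B * Real.log (4 * n / δ))} ≤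
      ENNReal.ofReal δ ∧
    μ {ω | ¬ (∑ i ∈ Finset.range n, Y i ω ≤
        2 * ∑ i ∈ Finset.range n, (μ[Y i | F i]) ω + 8 * B * Real.log (4 * n / δ))} ≤
      ENNReal.ofReal δ := by
  have hlog₀ : 0 ≤ log δ⁻¹ := log_nonneg ((one_le_inv₀ hδ0).2 hδ1.le)
  have hlog : log δ⁻¹ ≤ log (4 * n / δ) := by
    refine log_le_log (inv_pos.2 hδ0) ?_
    rw [div_eq_mul_inv]
    exact le_mul_of_one_le_left (inv_pos.2 hδ0).le (by norm_cast; omega)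
  have hT : ∀ᵐ ω ∂μ, 0 ≤ ∑ i ∈ range n, (μ[Y i | F i]) ω := by
    have hE i : 0 ≤ᵐ[μ] μ[Y i | F i] :=
      condExp_nonneg (by filter_upwards [hbdd] with ω h using (h i).1)
    filter_upwards [ae_all_iff.2 hE] with ω h using sum_nonneg fun i _ => h i
  constructor
  · refine (measure_mono_ae ?_).trans
      (measure_mul_log_inv_le_sum_sub_sum_le F hB hadapt hbdd (-1) n hδ0)
    filter_upwards [hT] with ω hTω (hbad : ¬ _ ≤ _)
    show _ ≤ _
    rw [not_le] at hbad
    nlinarith [mul_nonneg (sub_nonneg.2 exp_neg_one_lt_half.le) hTω,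
      mul_nonneg hB.le (sub_nonneg.2 hlog), mul_nonneg hB.le hlog₀]
  · refine (measure_mono_ae ?_).trans
      (measure_mul_log_inv_le_sum_sub_sum_le F hB hadapt hbdd 1 n hδ0)
    filter_upwards [hT] with ω hTω (hbad : ¬ _ ≤ _)
    show _ ≤ _
    rw [not_le] at hbad
    nlinarith [mul_nonneg (sub_nonneg.2 exp_one_lt_three.le) hTω,
      mul_nonneg hB.le (sub_nonneg.2 hlog), mul_nonneg hB.le hlog₀]
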